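/- arXiv:2011.03461 — 4 statements merged into one kernel-verified Lean document; each statement's English description precedes it below -/
import Mathlib

section
/- In any three-valued Łukasiewicz algebra, Moisil's determination principle holds: if △x = △y and ▽x = ▽y, then x = y (where △x = ∼▽∼x). -/
/-- A three-valued Łukasiewicz algebra: a De Morgan algebra (bounded distributive
lattice with a De Morgan negation) with a possibility operator `▽` satisfying
(L1) `∼x ∨ ▽x = 1`, (L2) `∼x ∧ x = ∼x ∧ ▽x`, (L3) `▽(x ∧ y) = ▽x ∧ ▽y`. -/
class LukasiewiczAlgebra (L : Type*) extends DistribLattice L, BoundedOrder L where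
  neg : L → L
  neg_neg : ∀ x : L, neg (neg x) = x
  neg_inf : ∀ x y : L, neg (x ⊓ y) = neg x ⊔ neg y
  nabla : L → L
  l1 : ∀ x : L, neg x ⊔ nabla x = ⊤
  l2 : ∀ x : L, neg x ⊓ x = neg x ⊓ nabla x
  l3 : ∀ x y : L, nabla (x ⊓ y) = nabla x ⊓ nabla y

open LukasiewiczAlgebra

section Aux

variable {L : Type*} [LukasiewiczAlgebra L]

lemma luk_neg_antitone {a b : L} (h : a ≤ b) : neg b ≤ neg a := by
  have h' : a ⊓ b = a := inf_eq_left.mpr h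
  have := congrArg neg h'
  rw [LukasiewiczAlgebra.neg_inf] at this
  exact sup_eq_left.mp this

lemma luk_neg_sup (a b : L) : neg (a ⊔ b) = neg a ⊓ neg b := by
  have : neg (neg a ⊓ neg b) = a ⊔ b := by
    rw [LukasiewiczAlgebra.neg_inf, LukasiewiczAlgebra.neg_neg, LukasiewiczAlgebra.neg_neg]
  calc neg (a ⊔ b) = neg (neg (neg a ⊓ neg b)) := by rw [this]
    _ = neg a ⊓ neg b := LukasiewiczAlgebra.neg_neg _

lemma luk_nabla_mono {a b : L} (h : a ≤ b) : nabla a ≤ nabla b := by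
  have h' : a ⊓ b = a := inf_eq_left.mpr h
  have := congrArg nabla h'
  rw [l3] at this
  exact inf_eq_left.mp this

lemma luk_le_nabla (a : L) : a ≤ nabla a := by
  have : a = (a ⊓ neg a) ⊔ (a ⊓ nabla a) := by
    rw [← inf_sup_left, l1, inf_top_eq]
  calc a = (a ⊓ neg a) ⊔ (a ⊓ nabla a) := this
    _ ≤ nabla a ⊔ nabla a := by
        apply sup_le_sup
        · rw [inf_comm, l2]; exact inf_le_right
        · exact inf_le_right
    _ = nabla a := sup_idem _

/-- `a = (a ⊔ ∼a) ⊓ ▽a`. -/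
lemma luk_rep1 (a : L) : (a ⊔ neg a) ⊓ nabla a = a := by
  rw [inf_sup_right]
  rw [← l2]
  rw [inf_comm (neg a) a, ← inf_sup_left]
  rw [sup_comm, l1, inf_top_eq]

/-- `a = △a ⊔ (a ⊓ ∼a)`. -/
lemma luk_rep2 (a : L) : neg (nabla (neg a)) ⊔ (a ⊓ neg a) = a := by
  have h := luk_rep1 (neg a)
  have := congrArg neg h
  rw [LukasiewiczAlgebra.neg_inf, luk_neg_sup, LukasiewiczAlgebra.neg_neg] at this
  rw [sup_comm] at this
  exact this

/-- Kleene inequality, derivable from L1–L3. -/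
lemma luk_kleene (x y : L) : x ⊓ neg x ≤ y ⊔ neg y := by
  set u := x ⊓ neg x with hu
  set w := y ⊓ neg y with hw
  have hnw : neg w = y ⊔ neg y := by rw [hw, LukasiewiczAlgebra.neg_inf, LukasiewiczAlgebra.neg_neg, sup_comm]
  have hnu : neg u = x ⊔ neg x := by rw [hu, LukasiewiczAlgebra.neg_inf, LukasiewiczAlgebra.neg_neg, sup_comm]
  have hule : u ≤ neg u := by rw [hnu]; exact le_trans inf_le_left le_sup_left
  have hwle : w ≤ neg w := by rw [hnw]; exact le_trans inf_le_left le_sup_left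
  set r := u ⊓ w with hr
  have hrle : r ≤ neg r := le_trans (le_trans inf_le_left hule) (luk_neg_antitone inf_le_left)
  -- ∼r ⊓ ▽r = r
  have key : neg r ⊓ nabla r = r := by
    rw [← l2]
    exact inf_eq_right.mpr hrle
  -- u ⊓ ▽w ≤ r
  have step : u ⊓ nabla w ≤ r := by
    have h1' : u ⊓ nabla w ≤ nabla r := by
      calc u ⊓ nabla w ≤ nabla u ⊓ nabla w := inf_le_inf_right _ (luk_le_nabla u)
        _ = nabla r := (l3 u w).symm
    have h2' : u ⊓ nabla w ≤ neg r :=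
      le_trans inf_le_left (le_trans hule (luk_neg_antitone inf_le_left))
    calc u ⊓ nabla w ≤ neg r ⊓ nabla r := le_inf h2' h1'
      _ = r := key
  have : u = (u ⊓ neg w) ⊔ (u ⊓ nabla w) := by
    rw [← inf_sup_left, l1, inf_top_eq]
  calc u = (u ⊓ neg w) ⊔ (u ⊓ nabla w) := this
    _ ≤ neg w ⊔ r := sup_le_sup inf_le_right step
    _ ≤ neg w ⊔ neg w := sup_le_sup le_rfl (le_trans inf_le_right hwle)
    _ = neg w := sup_idem _
    _ = y ⊔ neg y := hnw

lemma luk_det_le {x y : L}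
    (h1 : neg (nabla (neg x)) = neg (nabla (neg y))) (h2 : nabla x = nabla y) :
    x ≤ y := by
  have htri : neg (nabla (neg y)) ≤ y := by
    have := luk_neg_antitone (luk_le_nabla (neg y))
    rwa [LukasiewiczAlgebra.neg_neg] at this
  have hmid : x ⊓ neg x ≤ y := by
    have hk : x ⊓ neg x ≤ y ⊔ neg y := luk_kleene x y
    have hn : x ⊓ neg x ≤ nabla y := by
      rw [← h2]
      exact le_trans inf_le_left (luk_le_nabla x)
    calc x ⊓ neg x ≤ (y ⊔ neg y) ⊓ nabla y := le_inf hk hn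
      _ = y := luk_rep1 y
  calc x = neg (nabla (neg x)) ⊔ (x ⊓ neg x) := (luk_rep2 x).symm
    _ = neg (nabla (neg y)) ⊔ (x ⊓ neg x) := by rw [h1]
    _ ≤ y ⊔ y := sup_le_sup htri hmid
    _ = y := sup_idem _

end Aux

/-- Moisil's determination principle: if `△x = △y` and `▽x = ▽y` then `x = y`,
where `△x = ∼▽∼x`. -/
theorem moisil_determination {L : Type*} [LukasiewiczAlgebra L] (x y : L)
    (h1 : neg (nabla (neg x)) = neg (nabla (neg y))) (h2 : nabla x = nabla y) :
    x = y := by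
  exact le_antisymm (luk_det_le h1 h2) (luk_det_le h1.symm h2.symm)
end

section
/- In the lattice A(U) of approximation pairs with ∼(A,B) = (Bᶜ, Aᶜ), △(A,B) = (A,A), ▽(A,B) = (B,B), the Heyting implication is given by (A,B) ⇒ (C,D) = (Bᶜ ∪ C ∪ (Aᶜ ∩ D), Bᶜ ∪ D). -/
/-- In the lattice of approximation pairs on `U` (pairs `(A,B)` with `A ⊆ B`, ordered
componentwise), the Heyting implication of `(A,B)` and `(C,D)` is the pair
`(Bᶜ ∪ C ∪ (Aᶜ ∩ D), Bᶜ ∪ D)`: it is an approximation pair and it is the greatest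
approximation pair `(X,Y)` with `(A,B) ⊓ (X,Y) ≤ (C,D)`. -/
theorem approx_heyting_implication {U : Type*} (A B C D : Set U)
    (hAB : A ⊆ B) (hCD : C ⊆ D) :
    (Bᶜ ∪ C ∪ (Aᶜ ∩ D)) ⊆ (Bᶜ ∪ D) ∧
    ∀ X Y : Set U, X ⊆ Y →
      ((A ∩ X ⊆ C ∧ B ∩ Y ⊆ D) ↔ (X ⊆ Bᶜ ∪ C ∪ (Aᶜ ∩ D) ∧ Y ⊆ Bᶜ ∪ D)) := by
  constructor
  · rintro x (( hx | hx) | ⟨_, hx⟩)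
    · exact Or.inl hx
    · exact Or.inr (hCD hx)
    · exact Or.inr hx
  · intro X Y hXY
    constructor
    · rintro ⟨h1, h2⟩
      constructor
      · intro x hx
        by_cases hB : x ∈ B
        · by_cases hA : x ∈ A
          · exact Or.inl (Or.inr (h1 ⟨hA, hx⟩))
          · exact Or.inr ⟨hA, h2 ⟨hB, hXY hx⟩⟩
        · exact Or.inl (Or.inl hB)
      · intro y hy
        by_cases hB : y ∈ B
        · exact Or.inr (h2 ⟨hB, hy⟩)
        · exact Or.inl hB
    · rintro ⟨h1, h2⟩
      constructor
      · rintro x ⟨hA, hX⟩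
        rcases h1 hX with (hB | hC) | ⟨hA', _⟩
        · exact absurd (hAB hA) hB
        · exact hC
        · exact absurd hA hA'
      · rintro y ⟨hB, hY⟩
        rcases h2 hY with h | h
        · exact absurd hB h
        · exact h
end

section
/- If F is a complete sublattice of 3^U, then both C(F) = {C(f) | f ∈ F} and S(F) = {S(f) | f ∈ F} are Alexandrov topologies on U (closed under arbitrary unions and intersections); if in addition F is closed under ∼, then C(F) and S(F) are dual topologies. -/
abbrev Three := Fin 3

def core {U : Type*} (f : U → Three) : Set U := {x | f x = 2}

def supp {U : Type*} (f : U → Three) : Set U := {x | 1 ≤ f x}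

/-- The De Morgan negation on `3`: `∼0 = 1`, `∼u = u`, `∼1 = 0`. -/
def tneg : Three → Three := fun a => if a = 0 then 2 else if a = 1 then 1 else 0

lemma two_le_iff (a : Three) : a = 2 ↔ 2 ≤ a := by
  have := a.isLt
  rw [Fin.ext_iff, Fin.le_def]
  omega

lemma core_sSup {U : Type*} (G : Set (U → Three)) :
    core (sSup G) = ⋃ f ∈ G, core f := by
  ext x
  simp only [core, Set.mem_setOf_eq, Set.mem_iUnion, sSup_apply, two_le_iff]
  rw [show ((2:Three) ≤ ⨆ f : G, (f : U → Three) x) ↔ (1 : Three) < _ from Iff.rfl, lt_iSup_iff]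
  constructor
  · rintro ⟨⟨f, hf⟩, h⟩; exact ⟨f, hf, h⟩
  · rintro ⟨f, hf, h⟩; exact ⟨⟨f, hf⟩, h⟩

lemma supp_sSup {U : Type*} (G : Set (U → Three)) :
    supp (sSup G) = ⋃ f ∈ G, supp f := by
  ext x
  simp only [supp, Set.mem_setOf_eq, Set.mem_iUnion, sSup_apply]
  rw [show ((1:Three) ≤ ⨆ f : G, (f : U → Three) x) ↔ (0 : Three) < _ from Iff.rfl, lt_iSup_iff]
  constructor
  · rintro ⟨⟨f, hf⟩, h⟩; exact ⟨f, hf, h⟩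
  · rintro ⟨f, hf, h⟩; exact ⟨⟨f, hf⟩, h⟩

lemma core_sInf {U : Type*} (G : Set (U → Three)) :
    core (sInf G) = ⋂ f ∈ G, core f := by
  ext x
  simp only [core, Set.mem_setOf_eq, Set.mem_iInter, sInf_apply, two_le_iff, le_iInf_iff,
    Subtype.forall]

lemma supp_sInf {U : Type*} (G : Set (U → Three)) :
    supp (sInf G) = ⋂ f ∈ G, supp f := by
  ext x
  simp only [supp, Set.mem_setOf_eq, Set.mem_iInter, sInf_apply, le_iInf_iff, Subtype.forall]

lemma image_restrict {U : Type*} (m : (U → Three) → Set U) (F : Set (U → Three))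
    (A : Set (Set U)) (hA : A ⊆ m '' F) : A = m '' {f ∈ F | m f ∈ A} := by
  ext a
  constructor
  · intro ha
    obtain ⟨f, hf, rfl⟩ := hA ha
    exact ⟨f, ⟨hf, ha⟩, rfl⟩
  · rintro ⟨f, hf, rfl⟩; exact hf.2

/-- If `F` is a complete sublattice of `3^U`, then the families of cores and of
supports of members of `F` are Alexandrov topologies (closed under arbitrary unions
and intersections); if moreover `F` is closed under `∼`, they are dual topologies. -/
theorem coreSet_suppSet_alexandrov {U : Type*} (F : Set (U → Three))
    (hsup : ∀ G ⊆ F, sSup G ∈ F) (hinf : ∀ G ⊆ F, sInf G ∈ F) :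
    (∀ A ⊆ core '' F, ⋃₀ A ∈ core '' F ∧ ⋂₀ A ∈ core '' F) ∧
    (∀ A ⊆ supp '' F, ⋃₀ A ∈ supp '' F ∧ ⋂₀ A ∈ supp '' F) ∧
    ((∀ f ∈ F, tneg ∘ f ∈ F) →
      ∀ X : Set U, X ∈ core '' F ↔ Xᶜ ∈ supp '' F) := by
  refine ⟨fun A hA => ?_, fun A hA => ?_, fun hneg X => ?_⟩
  · set G : Set (U → Three) := {f ∈ F | core f ∈ A} with hG
    have hGF : G ⊆ F := fun f hf => hf.1
    have hAG := image_restrict core F A hA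
    constructor
    · exact ⟨sSup G, hsup G hGF, by rw [core_sSup, hAG, Set.sUnion_image]⟩
    · exact ⟨sInf G, hinf G hGF, by rw [core_sInf, hAG, Set.sInter_image]⟩
  · set G : Set (U → Three) := {f ∈ F | supp f ∈ A} with hG
    have hGF : G ⊆ F := fun f hf => hf.1
    have hAG := image_restrict supp F A hA
    constructor
    · exact ⟨sSup G, hsup G hGF, by rw [supp_sSup, hAG, Set.sUnion_image]⟩
    · exact ⟨sInf G, hinf G hGF, by rw [supp_sInf, hAG, Set.sInter_image]⟩
  · have h1 : ∀ a : Three, ((1:Three) ≤ tneg a ↔ ¬ a = 2) := by decide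
    have h2 : ∀ a : Three, (tneg a = 2 ↔ ¬ (1:Three) ≤ a) := by decide
    constructor
    · rintro ⟨f, hf, rfl⟩
      refine ⟨tneg ∘ f, hneg f hf, ?_⟩
      ext x
      simp [supp, core, h1]
    · rintro ⟨f, hf, hX⟩
      refine ⟨tneg ∘ f, hneg f hf, ?_⟩
      have hc : core (tneg ∘ f) = (supp f)ᶜ := by
        ext x; simp [supp, core, h2]
      rw [hc, hX, compl_compl]
end

section
/- If F is a complete sublattice of 3^U closed under ∼ and under the pointwise pseudocomplement * (0*=1, u*=0, 1*=0), then C(F) = S(F) and this family is closed under set-theoretic complement (hence a complete Boolean sublattice of P(U)). -/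
/-- Pseudocomplement on `3`: `0* = 1`, `u* = 0`, `1* = 0`. -/
def tstar : Three → Three := fun a => if a = 0 then 2 else 0

/-- If `F` is a complete sublattice of `3^U` closed under `∼` and `*`, then
`C(F) = S(F)` and this family is closed under set-theoretic complement. -/
theorem coreSet_eq_suppSet_boolean {U : Type*} (F : Set (U → Three))
    (hsup : ∀ G ⊆ F, sSup G ∈ F) (hinf : ∀ G ⊆ F, sInf G ∈ F)
    (hneg : ∀ f ∈ F, tneg ∘ f ∈ F) (hstar : ∀ f ∈ F, tstar ∘ f ∈ F) :
    core '' F = supp '' F ∧ ∀ X ∈ core '' F, Xᶜ ∈ core '' F := by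
  have h1 : ∀ a : Three, (1 ≤ tstar (tneg a)) ↔ a = 2 := by decide
  have h2 : ∀ a : Three, (tstar (tstar a) = 2) ↔ 1 ≤ a := by decide
  have h3 : ∀ a : Three, (tstar (tstar (tneg a)) = 2) ↔ ¬ a = 2 := by decide
  constructor
  · apply subset_antisymm
    · rintro _ ⟨f, hf, rfl⟩
      exact ⟨tstar ∘ tneg ∘ f, hstar _ (hneg _ hf), by
        ext x; simpa [core, supp] using h1 (f x)⟩
    · rintro _ ⟨f, hf, rfl⟩
      exact ⟨tstar ∘ tstar ∘ f, hstar _ (hstar _ hf), by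
        ext x; simpa [core, supp] using h2 (f x)⟩
  · rintro _ ⟨f, hf, rfl⟩
    exact ⟨tstar ∘ tstar ∘ tneg ∘ f, hstar _ (hstar _ (hneg _ hf)), by
      ext x; simpa [core, supp] using h3 (f x)⟩
end
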